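/- Combinatorial absorption of resonant products: let m ∈ R_min with m_{j+} ≠ 0 (so λ(ω*,m) > ω* and m₋ = 0), and let n ∈ Λ_j with ‖n‖ ≥ 2. Then, assuming (H6) (which forces n₋ ≠ 0), the multi-index m − e^{j+} + n belongs to the ignored set I; i.e., there exists m' ∈ R_min with m' ≺ m − e^{j+} + n. -/

import Mathlib

noncomputable section

/-- Multi-indices `m = (m₊, m₋) ∈ ℕ₀^{2N}`. -/
abbrev Idx (N : ℕ) := (Fin N → ℕ) × (Fin N → ℕ)

/-- `‖m‖ = Σ_k (m_{+,k} + m_{−,k})`. -/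
def idxNorm {N : ℕ} (m : Idx N) : ℕ := ∑ j, (m.1 j + m.2 j)

/-- `λ(m) = Σ_k λ_k (m_{+,k} − m_{−,k})`. -/
def lamIdx {N : ℕ} (lam : Fin N → ℝ) (m : Idx N) : ℝ :=
  ∑ j, lam j * ((m.1 j : ℝ) - (m.2 j : ℝ))

/-- `m' ⪯ m`. -/
def idxLE {N : ℕ} (m' m : Idx N) : Prop := ∀ j, m'.1 j + m'.2 j ≤ m.1 j + m.2 j

/-- `m' ≺ m`. -/
def idxLT {N : ℕ} (m' m : Idx N) : Prop := idxLE m' m ∧ idxNorm m' < idxNorm m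

/-- The resonant indices `R = {m : |λ(ω*, m)| > ω*}`. -/
def Rset {N : ℕ} (lam : Fin N → ℝ) (ωs : ℝ) : Set (Idx N) := {m | ωs < |lamIdx lam m|}

/-- The minimal resonant indices `R_min`. -/
def RminSet {N : ℕ} (lam : Fin N → ℝ) (ωs : ℝ) : Set (Idx N) :=
  {m | m ∈ Rset lam ωs ∧ ¬ ∃ m' ∈ Rset lam ωs, idxLT m' m}

/-- The ignored set `I = {m : ∃ m' ∈ R_min, m' ≺ m}`. -/
def Iset {N : ℕ} (lam : Fin N → ℝ) (ωs : ℝ) : Set (Idx N) :=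
  {m | ∃ m' ∈ RminSet lam ωs, idxLT m' m}

/-- The nonresonant indices `NR = ℕ₀^{2N} \ (R_min ∪ I)`. -/
def NRset {N : ℕ} (lam : Fin N → ℝ) (ωs : ℝ) : Set (Idx N) :=
  {m | m ∉ RminSet lam ωs ∧ m ∉ Iset lam ωs}

/-- `Λ_j = {n ∈ NR : λ(ω*, n) = λ_j(ω*)}`. -/
def LamJ {N : ℕ} (lam : Fin N → ℝ) (ωs : ℝ) (j : Fin N) : Set (Idx N) :=
  {n | n ∈ NRset lam ωs ∧ lamIdx lam n = lam j}

/-- Every resonant index that is not minimal is ignored. -/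
lemma mem_Iset_of_mem_Rset {N : ℕ} (lam : Fin N → ℝ) (ωs : ℝ) :
    ∀ k (M : Idx N), idxNorm M ≤ k → M ∈ Rset lam ωs → M ∉ RminSet lam ωs →
      M ∈ Iset lam ωs := by
  intro k
  induction k with
  | zero =>
    intro M hMk hMR hMmin
    have : ∃ m'' ∈ Rset lam ωs, idxLT m'' M := by
      by_contra h; exact hMmin ⟨hMR, h⟩
    obtain ⟨m'', _, hlt⟩ := this
    have := hlt.2; omega
  | succ k ih =>
    intro M hMk hMR hMmin
    have : ∃ m'' ∈ Rset lam ωs, idxLT m'' M := by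
      by_contra h; exact hMmin ⟨hMR, h⟩
    obtain ⟨m'', hR, hlt⟩ := this
    by_cases hc : m'' ∈ RminSet lam ωs
    · exact ⟨m'', hc, hlt⟩
    · obtain ⟨m', hm', hlt'⟩ := ih m'' (by have := hlt.2; omega) hR hc
      exact ⟨m', hm', fun i => (hlt'.1 i).trans (hlt.1 i), hlt'.2.trans hlt.2⟩

/-- **Combinatorial absorption of resonant products** (from the proof of Lemma 4.4):
let `m ∈ R_min` with `m_{j+} ≠ 0` (so `λ(ω*,m) > ω*` and `m₋ = 0`), and let `n ∈ Λ_j` with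
`‖n‖ ≥ 2`.  Then, assuming (H6) (which forces `n₋ ≠ 0`), the multi-index `m − e^{j+} + n`
belongs to the ignored set `I`; i.e. there is `m' ∈ R_min` with `m' ≺ m − e^{j+} + n`. -/
theorem resonant_product_ignored {N : ℕ} (lam : Fin N → ℝ) (ωs : ℝ)
    (hωs : 0 < ωs) (hlam : ∀ j, 0 < lam j)
    -- hypothesis (H6), first part:
    (hH6a : ∀ mp : Fin N → ℕ, 2 ≤ ∑ j, mp j → ∀ j, lamIdx lam (mp, 0) ≠ lam j)
    -- hypothesis (H6), second part:
    (hH6b : ∀ m : Idx N, m ∉ Iset lam ωs → |lamIdx lam m| ≠ ωs)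
    (m : Idx N) (hm : m ∈ RminSet lam ωs) (j : Fin N) (hj : m.1 j ≠ 0)
    (hpos : ωs < lamIdx lam m) (hmminus : m.2 = 0)
    (n : Idx N) (hn : n ∈ LamJ lam ωs j) (hn2 : 2 ≤ idxNorm n) :
    (m.1 - Pi.single j 1 + n.1, m.2 + n.2) ∈ Iset lam ωs := by
  obtain ⟨⟨-, -⟩, hlamn⟩ := hn
  set M : Idx N := (m.1 - Pi.single j 1 + n.1, m.2 + n.2) with hM
  have hsingle : ∀ i, (Pi.single j 1 : Fin N → ℕ) i ≤ m.1 i := by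
    intro i
    rcases eq_or_ne i j with rfl | hij
    · simpa [Pi.single_eq_same] using Nat.one_le_iff_ne_zero.mpr hj
    · simp [Pi.single_eq_of_ne hij]
  -- λ(M) = λ(m) - λ_j + λ(n) = λ(m)
  have hlamM : lamIdx lam M = lamIdx lam m := by
    have hsum : lamIdx lam M
        = lamIdx lam m - lam j + lamIdx lam n := by
      unfold lamIdx
      have hj' : lam j = ∑ i, lam i * ((Pi.single j 1 : Fin N → ℕ) i : ℝ) := by
        rw [Fintype.sum_eq_single j]
        · simp
        · intro i hi; simp [Pi.single_eq_of_ne hi]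
      rw [hj', ← Finset.sum_sub_distrib, ← Finset.sum_add_distrib]
      apply Finset.sum_congr rfl
      intro i _
      have h1 : ((m.1 - Pi.single j 1 + n.1 : Fin N → ℕ) i : ℝ)
          = (m.1 i : ℝ) - ((Pi.single j 1 : Fin N → ℕ) i : ℝ) + n.1 i := by
        have : (m.1 - Pi.single j 1 + n.1 : Fin N → ℕ) i = m.1 i - (Pi.single j 1 : Fin N → ℕ) i + n.1 i := rfl
        rw [this]
        push_cast [Nat.cast_sub (hsingle i)]
        ring
      have h2 : ((m.2 + n.2 : Fin N → ℕ) i : ℝ) = (m.2 i : ℝ) + n.2 i := by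
        rw [Pi.add_apply]; push_cast; ring
      rw [h1, h2]; ring
    rw [hsum, hlamn]; ring
  have hMR : M ∈ Rset lam ωs := by
    rw [Rset, Set.mem_setOf_eq, hlamM]
    calc ωs < lamIdx lam m := hpos
    _ ≤ |lamIdx lam m| := le_abs_self _
  -- n₋ ≠ 0 by (H6a), so M is not minimal
  have hn2ne : n.2 ≠ 0 := by
    intro h0
    have hn' : n = (n.1, (0 : Fin N → ℕ)) := by
      cases n; simp_all
    have hsum2 : 2 ≤ ∑ i, n.1 i := by
      have : idxNorm n = ∑ i, n.1 i := by
        rw [idxNorm]; apply Finset.sum_congr rfl; intro i _; rw [h0]; simp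
      omega
    exact hH6a n.1 hsum2 j (by rw [← hn']; exact hlamn)
  obtain ⟨k, hk⟩ : ∃ k, n.2 k ≠ 0 := by
    by_contra h; push_neg at h; exact hn2ne (funext fun i => h i)
  have hMk : 1 ≤ M.2 k := by
    have : M.2 k = m.2 k + n.2 k := rfl
    omega
  -- the witness below M: remove one minus entry at k
  set m'' : Idx N := (M.1, M.2 - Pi.single k 1) with hm''
  have hsingle2 : ∀ i, (Pi.single k 1 : Fin N → ℕ) i ≤ M.2 i := by
    intro i
    rcases eq_or_ne i k with rfl | hik
    · simpa [Pi.single_eq_same] using hMk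
    · simp [Pi.single_eq_of_ne hik]
  have hlamm'' : lamIdx lam m'' = lamIdx lam M + lam k := by
    unfold lamIdx
    have hk' : lam k = ∑ i, lam i * ((Pi.single k 1 : Fin N → ℕ) i : ℝ) := by
      rw [Fintype.sum_eq_single k]
      · simp
      · intro i hi; simp [Pi.single_eq_of_ne hi]
    rw [hk', ← Finset.sum_add_distrib]
    apply Finset.sum_congr rfl
    intro i _
    have h1 : ((M.2 - Pi.single k 1 : Fin N → ℕ) i : ℝ)
        = (M.2 i : ℝ) - ((Pi.single k 1 : Fin N → ℕ) i : ℝ) := by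
      have : (M.2 - Pi.single k 1 : Fin N → ℕ) i = M.2 i - (Pi.single k 1 : Fin N → ℕ) i := rfl
      rw [this, Nat.cast_sub (hsingle2 i)]
    rw [h1]; ring
  have hm''R : m'' ∈ Rset lam ωs := by
    rw [Rset, Set.mem_setOf_eq, hlamm'', hlamM]
    have : ωs < lamIdx lam m + lam k := by
      have := hlam k; linarith
    calc ωs < lamIdx lam m + lam k := this
    _ ≤ |lamIdx lam m + lam k| := le_abs_self _
  have h2i : ∀ i, m''.2 i = M.2 i - (Pi.single k 1 : Fin N → ℕ) i := fun _ => rfl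
  have h1i : ∀ i, m''.1 i = M.1 i := fun _ => rfl
  have hm''lt : idxLT m'' M := by
    constructor
    · intro i
      have := h2i i; have := h1i i
      omega
    · simp only [idxNorm]
      apply Finset.sum_lt_sum
      · intro i _
        have ha : (m.2 + n.2 - Pi.single k 1 : Fin N → ℕ) i
            = (m.2 + n.2 : Fin N → ℕ) i - (Pi.single k 1 : Fin N → ℕ) i := rfl
        have := h2i i; have := h1i i
        omega
      · refine ⟨k, Finset.mem_univ k, ?_⟩
        have ha : (m.2 + n.2 - Pi.single k 1 : Fin N → ℕ) k
            = (m.2 + n.2 : Fin N → ℕ) k - (Pi.single k 1 : Fin N → ℕ) k := rfl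
        have hb : (m.2 + n.2 : Fin N → ℕ) k = m.2 k + n.2 k := rfl
        have h3 : (Pi.single k 1 : Fin N → ℕ) k = 1 := Pi.single_eq_same k 1
        have := h2i k; have := h1i k
        omega
  have hMnotmin : M ∉ RminSet lam ωs := by
    intro hmin
    exact hmin.2 ⟨m'', hm''R, hm''lt⟩
  exact mem_Iset_of_mem_Rset lam ωs (idxNorm M) M le_rfl hMR hMnotmin
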